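/- arXiv:1503.05691 — 2 statements merged into one kernel-verified Lean document; each statement's English description precedes it below -/
import Mathlib

section
/- Let G be a finite group in which every element has order dividing 4, let w ∈ G be an element of order 2 such that the only elements of G commuting with w are 1 and w. Then G has no element of order 4, and consequently every element of G is an involution or the identity; combined with the centralizer condition this forces G = {1, w}. -/
theorem stmt3 {G : Type*} [Group G] [Finite G]
    (hexp : ∀ g : G, g ^ 4 = 1)
    (w : G) (hw2 : w ^ 2 = 1) (hw1 : w ≠ 1)
    (hc : ∀ g : G, g * w = w * g → g = 1 ∨ g = w) :
    (∀ g : G, orderOf g ≠ 4) ∧ (∀ g : G, g ^ 2 = 1) ∧ (∀ g : G, g = 1 ∨ g = w) := by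
  have hww : w * w = 1 := by rw [← pow_two]; exact hw2
  have hww' : ∀ x : G, w * (w * x) = x := by
    intro x; rw [← mul_assoc, hww, one_mul]
  -- every involution is 1 or w
  have hinv : ∀ t : G, t * t = 1 → t = 1 ∨ t = w := by
    intro t ht
    by_contra h
    push_neg at h
    obtain ⟨ht1, htw⟩ := h
    have htinv : t⁻¹ = t := inv_eq_of_mul_eq_one_right ht
    set s := t * w with hs
    have hs2 : s * s * (s * s) = 1 := by
      have h4 := hexp s
      rw [show (4 : ℕ) = 2 * 2 from rfl, pow_mul, pow_two, pow_two] at h4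
      exact h4
    have hinv2 : (s * s)⁻¹ = s * s := inv_eq_of_mul_eq_one_right hs2
    have halt : s * s = w * t * (w * t) := by
      conv_lhs => rw [← hinv2]
      rw [hs, mul_inv_rev, mul_inv_rev, htinv, inv_eq_of_mul_eq_one_right hww]
    have hcomm : (s * s) * w = w * (s * s) := by
      conv_rhs => rw [halt]
      rw [hs]
      simp only [mul_assoc, hww', hww, mul_one]
    rcases hc (s * s) hcomm with h1 | h1
    · -- s*s = 1 means t commutes with w
      have : t * w = w * t := by
        have : (t * w)⁻¹ = t * w := inv_eq_of_mul_eq_one_right h1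
        rw [mul_inv_rev, htinv, inv_eq_of_mul_eq_one_right hww] at this
        exact this.symm
      rcases hc t this with h | h
      · exact ht1 h
      · exact htw h
    · -- s*s = w gives twt = 1 hence w = 1
      have h2 : t * w * (t * w) = w := h1
      rw [← mul_assoc] at h2
      have h3 : t * w * t = 1 := mul_right_cancel (a := t * w * t) (b := w) (by rw [h2, one_mul])
      have h4 : w = t⁻¹ * (t * w * t) * t⁻¹ := by group
      rw [h3, htinv, mul_one, ht] at h4
      exact hw1 h4
  -- every element squares to 1
  have hsq : ∀ g : G, g * g = 1 := by
    intro g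
    have h4 := hexp g
    rw [show (4 : ℕ) = 2 * 2 from rfl, pow_mul, pow_two, pow_two] at h4
    rcases hinv (g * g) h4 with h | h
    · exact h
    · exfalso
      have hcg : g * w = w * g := by
        conv_lhs => rw [← h]
        conv_rhs => rw [← h]
        group
      rcases hc g hcg with hg | hg
      · rw [hg, one_mul] at h; exact hw1 h.symm
      · rw [hg] at h; rw [hww] at h; exact hw1 h.symm
  refine ⟨?_, ?_, ?_⟩
  · intro g hg
    have hdvd : orderOf g ∣ 2 := orderOf_dvd_of_pow_eq_one (by rw [pow_two]; exact hsq g)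
    rw [hg] at hdvd
    omega
  · intro g; rw [pow_two]; exact hsq g
  · intro g; exact hinv g (hsq g)
end

section
/- Let (X_n)_{n≥1} be finite subsets of a set Ω with X_a ∩ X_b = X_{gcd(a,b)} for all a, b. Let n > 1 have distinct prime divisors p_1, …, p_k and set d_i = n/p_i. Then |⋃_{i=1}^n X_i| − |⋃_{i=1}^{n-1} X_i| = |X_n| − Σ_{r=1}^{k} (−1)^{r+1} Σ_{1 ≤ i_1 < ⋯ < i_r ≤ k} |X_{gcd(d_{i_1}, …, d_{i_r})}|. -/
theorem stmt7 {Ω : Type*} (X : ℕ → Set Ω)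
    (hfin : ∀ n, 1 ≤ n → (X n).Finite)
    (hgcd : ∀ a b, 1 ≤ a → 1 ≤ b → X a ∩ X b = X (Nat.gcd a b))
    (n : ℕ) (hn : 1 < n) :
    ((⋃ i ∈ Set.Icc 1 n, X i).ncard : ℤ) - ((⋃ i ∈ Set.Icc 1 (n - 1), X i).ncard : ℤ) =
      ((X n).ncard : ℤ) -
        ∑ T ∈ (n.primeFactors.powerset.filter fun T => T.Nonempty),
          (-1 : ℤ) ^ (T.card + 1) * ((X (T.gcd fun p => n / p)).ncard : ℤ) := by
  classical
  -- subset lemma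
  have hsub : ∀ a b : ℕ, 1 ≤ a → 1 ≤ b → a ∣ b → X a ⊆ X b := by
    intro a b ha hb hab
    have : X a ∩ X b = X a := by rw [hgcd a b ha hb, Nat.gcd_eq_left hab]
    rw [← this]; exact Set.inter_subset_right
  set A : Set Ω := ⋃ i ∈ Set.Icc 1 (n - 1), X i with hA
  have hAfin : A.Finite := by
    apply Set.Finite.biUnion (Set.finite_Icc 1 (n - 1))
    intro i hi; exact hfin i hi.1
  have hXnfin : (X n).Finite := hfin n (le_of_lt hn)
  -- split the union
  have hIcc : Set.Icc 1 n = insert n (Set.Icc 1 (n - 1)) := by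
    ext i; simp only [Set.mem_Icc, Set.mem_insert_iff]; omega
  have hUnion : (⋃ i ∈ Set.Icc 1 n, X i) = X n ∪ A := by
    rw [hIcc, Set.biUnion_insert]
  -- key intersection identity
  have hdiv : ∀ p ∈ n.primeFactors, 1 ≤ n / p := by
    intro p hp
    rcases Nat.mem_primeFactors.1 hp with ⟨hpp, hpn, -⟩
    exact Nat.one_le_div_iff hpp.pos |>.2 (Nat.le_of_dvd (by omega) hpn)
  have hXnA : X n ∩ A = ⋃ p ∈ n.primeFactors, X (n / p) := by
    apply Set.Subset.antisymm
    · rintro x ⟨hx, hxA⟩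
      simp only [hA, Set.mem_iUnion, Set.mem_Icc] at hxA
      obtain ⟨i, ⟨hi1, hi2⟩, hxi⟩ := hxA
      have hxg : x ∈ X (Nat.gcd n i) := by
        rw [← hgcd n i (by omega) hi1]; exact ⟨hx, hxi⟩
      set g := Nat.gcd n i with hg
      have hg1 : 1 ≤ g := Nat.gcd_pos_of_pos_right n (by omega)
      have hgdvd : g ∣ n := Nat.gcd_dvd_left n i
      have hglt : g < n := lt_of_le_of_lt (Nat.le_of_dvd (by omega) (Nat.gcd_dvd_right n i)) (by omega)
      -- find prime p with g ∣ n / p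
      set m := n / g with hm
      have hnm : n = g * m := (Nat.mul_div_cancel' hgdvd).symm
      have hm1 : 1 < m := by
        rcases Nat.lt_or_ge m 2 with h | h
        · interval_cases m <;> omega
        · omega
      set p := m.minFac with hp
      have hpp : p.Prime := Nat.minFac_prime (by omega)
      have hpm : p ∣ m := Nat.minFac_dvd m
      obtain ⟨m', hm'⟩ := hpm
      have hpn : p ∣ n := ⟨g * m', by rw [hnm, hm']; ring⟩
      have hpF : p ∈ n.primeFactors := Nat.mem_primeFactors.2 ⟨hpp, hpn, by omega⟩
      have hnp : n / p = g * m' := by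
        rw [hnm, hm']
        rw [show g * (p * m') = p * (g * m') by ring, Nat.mul_div_cancel_left _ hpp.pos]
      have : x ∈ X (n / p) := by
        apply hsub g (n / p) hg1 (hdiv p hpF) _ hxg
        rw [hnp]; exact ⟨m', rfl⟩
      exact Set.mem_biUnion hpF this
    · intro x hx
      simp only [Set.mem_iUnion] at hx
      obtain ⟨p, hp, hxp⟩ := hx
      rcases Nat.mem_primeFactors.1 hp with ⟨hpp, hpn, -⟩
      have hd : n / p ∣ n := Nat.div_dvd_of_dvd hpn
      have h1 : 1 ≤ n / p := hdiv p hp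
      constructor
      · exact hsub (n / p) n h1 (by omega) hd hxp
      · have hlt : n / p ≤ n - 1 := by
          have : n / p < n := Nat.div_lt_self (by omega) hpp.one_lt
          omega
        exact Set.mem_biUnion (Set.mem_Icc.2 ⟨h1, hlt⟩) hxp
  -- finiteness of pieces
  have hXnAfin : (X n ∩ A).Finite := hXnfin.inter_of_left A
  -- first reduction
  have hstep1 : ((⋃ i ∈ Set.Icc 1 n, X i).ncard : ℤ) - (A.ncard : ℤ) =
      ((X n).ncard : ℤ) - ((X n ∩ A).ncard : ℤ) := by
    rw [hUnion]
    have := Set.ncard_union_add_ncard_inter (X n) A hXnfin hAfin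
    have h2 : ((X n ∪ A).ncard : ℤ) + ((X n ∩ A).ncard : ℤ)
        = ((X n).ncard : ℤ) + (A.ncard : ℤ) := by exact_mod_cast congrArg Nat.cast this
    linarith
  rw [hstep1]
  congr 1
  -- inclusion-exclusion
  set S : ℕ → Finset Ω := fun p => if h : 1 ≤ n / p then (hfin (n / p) h).toFinset else ∅ with hS
  have hScoe : ∀ p ∈ n.primeFactors, (S p : Set Ω) = X (n / p) := by
    intro p hp
    simp only [hS, dif_pos (hdiv p hp), Set.Finite.coe_toFinset]
  have hgcdpos : ∀ T : Finset ℕ, T ⊆ n.primeFactors → T.Nonempty →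
      1 ≤ T.gcd fun p => n / p := by
    intro T hT ⟨a, ha⟩
    rcases Nat.eq_zero_or_pos (T.gcd fun p => n / p) with h | h
    · exfalso
      have := (Finset.gcd_eq_zero_iff.1 h) a ha
      have := hdiv a (hT ha)
      omega
    · exact h
  have hinf : ∀ T : Finset ℕ, (hne : T.Nonempty) → T ⊆ n.primeFactors →
      ((T.inf' hne S : Finset Ω) : Set Ω) = X (T.gcd fun p => n / p) := by
    intro T hne
    induction hne using Finset.Nonempty.cons_induction with
    | singleton a =>
      intro hT
      simp only [Finset.inf'_singleton, Finset.gcd_singleton]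
      rw [hScoe a (hT (Finset.mem_singleton_self a))]
      simp [normalize_eq]
    | cons a T ha hTne ih =>
      intro hT
      have hTsub : T ⊆ n.primeFactors := fun x hx => hT (Finset.mem_cons_of_mem hx)
      have haF : a ∈ n.primeFactors := hT (Finset.mem_cons_self a T)
      have hgc : (Finset.cons a T ha).gcd (fun p => n / p)
          = Nat.gcd (n / a) (T.gcd fun p => n / p) := by
        rw [Finset.cons_eq_insert, Finset.gcd_insert]; rfl
      rw [Finset.inf'_cons (H := hTne), hgc]
      have : ((S a ⊓ T.inf' hTne S : Finset Ω) : Set Ω)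
          = (S a : Set Ω) ∩ ((T.inf' hTne S : Finset Ω) : Set Ω) := by
        simp [Finset.coe_inter]
      rw [this, hScoe a haF, ih hTsub,
        hgcd (n / a) (T.gcd fun p => n / p) (hdiv a haF) (hgcdpos T hTsub hTne)]
  -- translate union to finset
  have hbU : (X n ∩ A) = ((n.primeFactors.biUnion S : Finset Ω) : Set Ω) := by
    rw [hXnA, Finset.coe_biUnion]
    apply Set.iUnion_congr; intro p
    by_cases hp : p ∈ n.primeFactors
    · simp [hp, hScoe p hp]
    · simp [hp]
  rw [hbU, Set.ncard_coe_finset]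
  rw [Finset.inclusion_exclusion_card_biUnion n.primeFactors S]
  rw [← Finset.sum_attach (Finset.filter (fun T => T.Nonempty) n.primeFactors.powerset)
    (fun T => (-1 : ℤ) ^ (T.card + 1) * ((X (T.gcd fun p => n / p)).ncard : ℤ))]
  apply Finset.sum_congr rfl
  rintro ⟨T, hTmem⟩ -
  obtain ⟨hTsub, hTne⟩ := Finset.mem_filter.1 hTmem
  have hTsub' := Finset.mem_powerset.1 hTsub
  congr 1
  rw [← hinf T hTne hTsub', Set.ncard_coe_finset]
end
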